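/- arXiv:1603.07522 — 6 statements merged into one kernel-verified Lean document; each statement's English description precedes it below -/
import Mathlib

section
/- Let p > 1 and let f : ℤ × ℝ → ℝ be continuous in the second variable with primitive F(k,t) = ∫₀ᵗ f(k,s) ds. Then conditions (H3′) and (H4′) cannot both hold: if (H4′) lim_{|t|→+∞} f(k,t)t/|t|^p = +∞ uniformly in k ∈ ℤ, then there exists T > 0 such that the function k ↦ sup_{|t|≤T} |F(k,t)| is not summable over ℤ, so (H3′) 'sup_{|t|≤T}|F(·,t)| ∈ ℓ¹ for all T > 0' fails. -/
open Real Set Filter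

/-!
Taking `M = 1` in (H4′) gives `T₀ > 0` with `f(k,s) ≥ s^(p-1)` for all `k` and all
`s ∈ [T₀, 2T₀]`. Hence `F(k,2T₀) - F(k,T₀) = ∫_{T₀}^{2T₀} f(k,s) ds ≥ δ := ∫_{T₀}^{2T₀} s^(p-1) ds > 0`
for every `k`, so `sup_{|t| ≤ 2T₀} |F(k,t)| ≥ δ/2` for every `k`: these terms do not tend to `0`.
-/

lemma not_summable_of_forall_le {ι : Type*} [Infinite ι] {u : ι → ℝ} {ε : ℝ} (hε : 0 < ε)
    (h : ∀ i, ε ≤ u i) : ¬ Summable u := fun hu =>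
  have ⟨i, hi⟩ := (hu.tendsto_cofinite_zero.eventually (gt_mem_nhds hε)).exists
  (h i).not_gt hi

lemma abs_le_iSup_abs_Icc {g : ℝ → ℝ} {a b x : ℝ} (hg : ContinuousOn g (Icc a b))
    (hx : x ∈ Icc a b) : |g x| ≤ ⨆ t : Icc a b, |g t| := by
  have hbdd : BddAbove (range fun t : Icc a b => |g t|) := by
    rw [← image_eq_range (fun x => |g x|)]
    exact (isCompact_Icc.image_of_continuousOn hg.abs).bddAbove
  exact le_ciSup hbdd ⟨x, hx⟩

lemma sub_le_two_mul_iSup_abs_Icc {g : ℝ → ℝ} {a b x y : ℝ} (hg : ContinuousOn g (Icc a b))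
    (hx : x ∈ Icc a b) (hy : y ∈ Icc a b) : g y - g x ≤ 2 * ⨆ t : Icc a b, |g t| := by
  have := abs_le_iSup_abs_Icc hg hx
  have := abs_le_iSup_abs_Icc hg hy
  linarith [le_abs_self (g y), neg_abs_le (g x)]

lemma rpow_sub_one_le_of_one_le_mul_div_abs_rpow {p s y : ℝ} (hs : 0 < s)
    (h : 1 ≤ y * s / |s| ^ p) : s ^ (p - 1) ≤ y := by
  rw [abs_of_pos hs, one_le_div (rpow_pos_of_pos hs p)] at h
  rw [rpow_sub_one hs.ne', div_le_iff₀ hs]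
  exact h

theorem H3'_and_H4'_contradictory_general
    (p : ℝ)
    (f : ℤ → ℝ → ℝ) (hf : ∀ k, Continuous (f k))
    (F : ℤ → ℝ → ℝ) (hF : ∀ k t, F k t = ∫ s in (0:ℝ)..t, f k s)
    (H4' : ∀ M : ℝ, ∃ T : ℝ, 0 < T ∧ ∀ k : ℤ, ∀ t : ℝ, T ≤ |t| →
      M ≤ f k t * t / |t| ^ p) :
    ∃ T : ℝ, 0 < T ∧ ¬ Summable (fun k : ℤ => ⨆ t : Icc (-T) T, |F k (t : ℝ)|) := by
  obtain ⟨T₀, hT₀, hlarge⟩ := H4' 1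
  have hpow : ContinuousOn (fun s : ℝ => s ^ (p - 1)) (Icc T₀ (2 * T₀)) := fun s hs =>
    (continuousAt_rpow_const s _ (Or.inl (hT₀.trans_le hs.1).ne')).continuousWithinAt
  have hδ : 0 < ∫ s in T₀..2 * T₀, s ^ (p - 1) :=
    intervalIntegral.intervalIntegral_pos_of_pos_on
      (hpow.intervalIntegrable_of_Icc (by linarith))
      (fun s hs => rpow_pos_of_pos (hT₀.trans hs.1) _) (by linarith)
  have hgain : ∀ k, ∫ s in T₀..2 * T₀, s ^ (p - 1) ≤ F k (2 * T₀) - F k T₀ := fun k => by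
    rw [hF, hF, intervalIntegral.integral_interval_sub_left
      ((hf k).intervalIntegrable _ _) ((hf k).intervalIntegrable _ _)]
    exact intervalIntegral.integral_mono_on (by linarith)
      (hpow.intervalIntegrable_of_Icc (by linarith)) ((hf k).intervalIntegrable _ _)
      fun s hs => rpow_sub_one_le_of_one_le_mul_div_abs_rpow (hT₀.trans_le hs.1)
        (hlarge k s (hs.1.trans (le_abs_self s)))
  refine ⟨2 * T₀, by positivity, not_summable_of_forall_le (half_pos hδ) fun k => ?_⟩
  have hFk : Continuous (F k) := by
    simpa only [← funext (hF k)] using intervalIntegral.continuous_primitive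
      (fun a b => (hf k).intervalIntegrable (μ := MeasureTheory.volume) a b) 0
  have := sub_le_two_mul_iSup_abs_Icc hFk.continuousOn
    (show T₀ ∈ Icc (-(2 * T₀)) (2 * T₀) from ⟨by linarith, by linarith⟩)
    (show 2 * T₀ ∈ Icc (-(2 * T₀)) (2 * T₀) from ⟨by linarith, le_rfl⟩)
  linarith [hgain k]

/-- Conditions (H3′) and (H4′) are contradictory: if
`f(k,t)·t/|t|^p → +∞` as `|t| → ∞` uniformly in `k` (H4′), then there is `T > 0`
for which `k ↦ sup_{|t| ≤ T} |F(k,t)|` is not summable over `ℤ`, i.e. (H3′) fails. -/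
theorem H3'_and_H4'_contradictory
    (p : ℝ) (hp : 1 < p)
    (f : ℤ → ℝ → ℝ) (hf : ∀ k, Continuous (f k))
    (F : ℤ → ℝ → ℝ) (hF : ∀ k t, F k t = ∫ s in (0:ℝ)..t, f k s)
    (H4' : ∀ M : ℝ, ∃ T : ℝ, 0 < T ∧ ∀ k : ℤ, ∀ t : ℝ, T ≤ |t| →
      M ≤ f k t * t / |t| ^ p) :
    ∃ T : ℝ, 0 < T ∧ ¬ Summable (fun k : ℤ => ⨆ t : Icc (-T) T, |F k (t : ℝ)|) :=
  H3'_and_H4'_contradictory_general p f hf F hF H4'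
end

section
/- Let p > 1, let a, b : ℤ → (0,+∞), and suppose (B): b(k) ≥ b₀ > 0 for all k ∈ ℤ and b(k) → +∞ as |k| → +∞. If {uₙ} is a sequence of functions ℤ → ℝ with ∑_{k∈ℤ}[a(k)|Δuₙ(k−1)|^p + b(k)|uₙ(k)|^p] ≤ M^p for all n and some M > 0, then {uₙ} has a subsequence that converges in ℓ^p(ℤ) norm, i.e. the embedding of X into ℓ^p is compact. -/
/-!
A bound `∑ b k * |u k| ^ p ≤ R` with `b > 0` confines each coordinate `u k` to a compact
interval, so by Tychonoff (the index set is countable) a bounded sequence has a pointwise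
convergent subsequence, and by Fatou its limit `v` satisfies the same bound. Since `b → ∞`, the
set `F` where `b < T` is finite and the `ℓ^p` mass of every `u n - v` outside `F` is at most
`2 ^ p * 2R / T`, uniformly in `n`; on `F`, pointwise convergence finishes the argument.
-/

open Real Set Filter Topology

lemma abs_sub_rpow_le {p : ℝ} (hp : 0 ≤ p) (x y : ℝ) :
    |x - y| ^ p ≤ 2 ^ p * (|x| ^ p + |y| ^ p) := by
  have hmax : |x - y| ≤ 2 * max |x| |y| := by
    linarith [abs_sub x y, le_max_left |x| |y|, le_max_right |x| |y|]
  calc |x - y| ^ p ≤ (2 * max |x| |y|) ^ p := rpow_le_rpow (abs_nonneg _) hmax hp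
    _ = 2 ^ p * max (|x| ^ p) (|y| ^ p) := by
      rw [mul_rpow zero_le_two (le_max_of_le_left (abs_nonneg x)),
        rpow_max (abs_nonneg x) (abs_nonneg y) hp]
    _ ≤ 2 ^ p * (|x| ^ p + |y| ^ p) := by
      gcongr
      exact max_le_add_of_nonneg (by positivity) (by positivity)

lemma abs_le_rpow_inv_of_mul_rpow_le {p c x R : ℝ} (hp : 0 < p) (hc : 0 < c)
    (h : c * |x| ^ p ≤ R) : |x| ≤ (R / c) ^ p⁻¹ := by
  have hR : 0 ≤ R := (by positivity : 0 ≤ c * |x| ^ p).trans h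
  rw [le_rpow_inv_iff_of_pos (abs_nonneg x) (by positivity) hp, le_div_iff₀' hc]
  exact h

section Series

variable {ι : Type*}

lemma Summable.of_mul_left_of_tendsto_atTop {w f : ι → ℝ} (hw : Tendsto w cofinite atTop)
    (hf : 0 ≤ f) (hwf : Summable fun k => w k * f k) : Summable f :=
  hwf.of_norm_bounded_eventually <| (hw.eventually_ge_atTop 1).mono fun k hk => by
    rw [Real.norm_of_nonneg (hf k)]
    exact le_mul_of_one_le_left (hf k) hk

/-- Fatou's lemma for series. -/
lemma summable_and_tsum_le_of_tendsto {f : ℕ → ι → ℝ} {g : ι → ℝ} {R : ℝ}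
    (hf : ∀ n, 0 ≤ f n) (hfg : ∀ k, Tendsto (fun n => f n k) atTop (𝓝 (g k)))
    (hsum : ∀ n, Summable (f n)) (hle : ∀ n, ∑' k, f n k ≤ R) :
    Summable g ∧ ∑' k, g k ≤ R := by
  have hg : 0 ≤ g := fun k => ge_of_tendsto' (hfg k) fun n => hf n k
  have hfin : ∀ s : Finset ι, ∑ k ∈ s, g k ≤ R := fun s =>
    le_of_tendsto' (tendsto_finsetSum s fun k _ => hfg k) fun n =>
      ((hsum n).sum_le_tsum s fun k _ => hf n k).trans (hle n)
  have hgs : Summable g := summable_of_sum_le hg hfin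
  exact ⟨hgs, hgs.tsum_le_of_sum_le hfin⟩

lemma tendsto_tsum_zero_of_tsum_mul_le {w : ι → ℝ} {f : ℕ → ι → ℝ} {R : ℝ}
    (hw0 : 0 ≤ w) (hw : Tendsto w cofinite atTop) (hf : ∀ n, 0 ≤ f n)
    (hf0 : ∀ k, Tendsto (fun n => f n k) atTop (𝓝 0))
    (hsum : ∀ n, Summable fun k => w k * f n k) (hle : ∀ n, ∑' k, w k * f n k ≤ R) :
    Tendsto (fun n => ∑' k, f n k) atTop (𝓝 0) := by
  refine tendsto_order.2 ⟨fun a ha => .of_forall fun n => ha.trans_le (tsum_nonneg (hf n)),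
    fun ε hε => ?_⟩
  obtain ⟨T, hRT, hT⟩ : ∃ T, R / T < ε / 2 ∧ 0 < T :=
    (((tendsto_const_nhds.div_atTop tendsto_id).eventually (gt_mem_nhds (half_pos hε))).and
      (eventually_gt_atTop 0)).exists
  have hFfin := eventually_cofinite.1 (hw.eventually_ge_atTop T)
  set F := hFfin.toFinset
  have hF : ∀ k ∉ F, T ≤ w k := fun k hk => by simpa [F] using hk
  have htail : ∀ n, ∑' k, f n k ≤ ∑ k ∈ F, f n k + R / T := fun n => by
    have hfs := Summable.of_mul_left_of_tendsto_atTop hw (hf n) (hsum n)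
    rw [← hfs.sum_add_tsum_compl (s := F)]
    gcongr
    calc ∑' k : ↥(↑F : Set ι)ᶜ, f n k
        ≤ ∑' k : ↥(↑F : Set ι)ᶜ, w k * f n k / T := by
          refine (hfs.subtype _).tsum_le_tsum (fun k => ?_) (((hsum n).subtype _).div_const T)
          rw [le_div_iff₀ hT, mul_comm]
          exact mul_le_mul_of_nonneg_right (hF k k.2) (hf n k)
      _ ≤ R / T := by
          rw [tsum_div_const]
          gcongr
          exact ((hsum n).tsum_subtype_le _ _ fun k => mul_nonneg (hw0 k) (hf n k)).trans
            (hle n)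
  have hhead : ∀ᶠ n in atTop, ∑ k ∈ F, f n k < ε / 2 := by
    have := tendsto_finsetSum F fun k _ => hf0 k
    rw [Finset.sum_const_zero] at this
    exact this.eventually (gt_mem_nhds (half_pos hε))
  filter_upwards [hhead] with n hn
  linarith [htail n]

end Series

lemma exists_strictMono_tendsto_pi_of_abs_le {ι : Type*} [Countable ι] {u : ℕ → ι → ℝ}
    {C : ι → ℝ} (h : ∀ n k, |u n k| ≤ C k) :
    ∃ (φ : ℕ → ℕ) (v : ι → ℝ), StrictMono φ ∧
      ∀ k, Tendsto (fun n => u (φ n) k) atTop (𝓝 (v k)) := by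
  obtain ⟨v, -, φ, hφ, hv⟩ :=
    (isCompact_univ_pi fun k => isCompact_Icc (a := -C k) (b := C k)).tendsto_subseq
      fun n k _ => abs_le.1 (h n k)
  exact ⟨φ, v, hφ, tendsto_pi_nhds.1 hv⟩

theorem exists_subseq_tendsto_tsum_rpow_sub_of_tsum_mul_rpow_le {ι : Type*} [Countable ι]
    {p R : ℝ} (hp : 0 < p) {w : ι → ℝ} (hw0 : ∀ k, 0 < w k) (hw : Tendsto w cofinite atTop)
    {u : ℕ → ι → ℝ}
    (hsum : ∀ n, Summable fun k => w k * |u n k| ^ p)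
    (hle : ∀ n, ∑' k, w k * |u n k| ^ p ≤ R) :
    ∃ (φ : ℕ → ℕ) (v : ι → ℝ), StrictMono φ ∧ Summable (fun k => |v k| ^ p) ∧
      Tendsto (fun n => ∑' k, |u (φ n) k - v k| ^ p) atTop (𝓝 0) := by
  obtain ⟨φ, v, hφ, huv⟩ := exists_strictMono_tendsto_pi_of_abs_le fun n k =>
    abs_le_rpow_inv_of_mul_rpow_le hp (hw0 k) <|
      (hsum n).le_tsum k (fun j _ => mul_nonneg (hw0 j).le (by positivity)) |>.trans (hle n)
  obtain ⟨hvsum, hvle⟩ := summable_and_tsum_le_of_tendsto (g := fun k => w k * |v k| ^ p)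
    (fun n k => mul_nonneg (hw0 k).le (by positivity))
    (fun k => ((huv k).abs.rpow_const (Or.inr hp.le)).const_mul (w k))
    (fun n => hsum (φ n)) (fun n => hle (φ n))
  have hdiff : ∀ n k, w k * |u (φ n) k - v k| ^ p ≤
      2 ^ p * (w k * |u (φ n) k| ^ p) + 2 ^ p * (w k * |v k| ^ p) := fun n k => by
    have := hw0 k
    calc w k * |u (φ n) k - v k| ^ p ≤ w k * (2 ^ p * (|u (φ n) k| ^ p + |v k| ^ p)) := by
          gcongr; exact abs_sub_rpow_le hp.le _ _
      _ = _ := by ring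
  have hmajor : ∀ n, Summable fun k =>
      2 ^ p * (w k * |u (φ n) k| ^ p) + 2 ^ p * (w k * |v k| ^ p) := fun n =>
    ((hsum (φ n)).mul_left _).add (hvsum.mul_left _)
  have hdsum : ∀ n, Summable fun k => w k * |u (φ n) k - v k| ^ p := fun n =>
    (hmajor n).of_nonneg_of_le (fun k => mul_nonneg (hw0 k).le (by positivity)) (hdiff n)
  refine ⟨φ, v, hφ, .of_mul_left_of_tendsto_atTop hw (fun k => by positivity) hvsum, ?_⟩
  refine tendsto_tsum_zero_of_tsum_mul_le (R := 2 ^ p * R + 2 ^ p * R) (fun k => (hw0 k).le) hw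
    (fun n k => by positivity) (fun k => ?_) hdsum (fun n => ?_)
  · simpa [zero_rpow hp.ne'] using ((huv k).sub_const (v k)).abs.rpow_const (Or.inr hp.le)
  · calc ∑' k, w k * |u (φ n) k - v k| ^ p
        ≤ ∑' k, (2 ^ p * (w k * |u (φ n) k| ^ p) + 2 ^ p * (w k * |v k| ^ p)) :=
          (hdsum n).tsum_le_tsum (hdiff n) (hmajor n)
      _ ≤ 2 ^ p * R + 2 ^ p * R := by
          rw [((hsum (φ n)).mul_left _).tsum_add (hvsum.mul_left _), tsum_mul_left,
            tsum_mul_left]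
          gcongr
          exact hle (φ n)

theorem embedding_X_lp_compact_general
    (p : ℝ) (hp : 1 < p)
    (a b : ℤ → ℝ) (ha : ∀ k, 0 < a k) (hb : ∀ k, 0 < b k)
    (hbinf : Tendsto b (cocompact ℤ) atTop)
    (M : ℝ)
    (u : ℕ → ℤ → ℝ)
    (hsum : ∀ n, Summable (fun k : ℤ =>
      a k * |u n k - u n (k - 1)| ^ p + b k * |u n k| ^ p))
    (hbd : ∀ n, (∑' k : ℤ, (a k * |u n k - u n (k - 1)| ^ p + b k * |u n k| ^ p))
      ≤ M ^ p) :
    ∃ (φ : ℕ → ℕ) (v : ℤ → ℝ), StrictMono φ ∧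
      Summable (fun k : ℤ => |v k| ^ p) ∧
      Tendsto (fun n : ℕ => (∑' k : ℤ, |u (φ n) k - v k| ^ p) ^ (1 / p))
        atTop (nhds 0) := by
  have hp0 : 0 < p := one_pos.trans hp
  have hle_sum : ∀ n k,
      b k * |u n k| ^ p ≤ a k * |u n k - u n (k - 1)| ^ p + b k * |u n k| ^ p := fun n k =>
    le_add_of_nonneg_left (mul_nonneg (ha k).le (by positivity))
  have hbsum : ∀ n, Summable fun k => b k * |u n k| ^ p := fun n =>
    (hsum n).of_nonneg_of_le (fun k => mul_nonneg (hb k).le (by positivity)) (hle_sum n)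
  rw [cocompact_eq_cofinite] at hbinf
  obtain ⟨φ, v, hφ, hv, hlim⟩ :=
    exists_subseq_tendsto_tsum_rpow_sub_of_tsum_mul_rpow_le hp0 hb hbinf hbsum fun n =>
      ((hbsum n).tsum_le_tsum (hle_sum n) (hsum n)).trans (hbd n)
  refine ⟨φ, v, hφ, hv, ?_⟩
  have hinv : 0 < 1 / p := one_div_pos.2 hp0
  simpa only [zero_rpow hinv.ne'] using hlim.rpow_const (Or.inr hinv.le)

/-- Compactness of the embedding `X ↪ ℓ^p(ℤ)`: any sequence bounded in the
norm of `X` has a subsequence converging in the `ℓ^p` norm. Here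
`(B)`: `b(k) ≥ b₀ > 0` and `b(k) → +∞` as `|k| → ∞`. -/
theorem embedding_X_lp_compact
    (p : ℝ) (hp : 1 < p)
    (a b : ℤ → ℝ) (ha : ∀ k, 0 < a k) (hb : ∀ k, 0 < b k)
    (b₀ : ℝ) (hb₀ : 0 < b₀) (hbb₀ : ∀ k, b₀ ≤ b k)
    (hbinf : Tendsto b (cocompact ℤ) atTop)
    (M : ℝ) (hM : 0 < M)
    (u : ℕ → ℤ → ℝ)
    (hsum : ∀ n, Summable (fun k : ℤ =>
      a k * |u n k - u n (k - 1)| ^ p + b k * |u n k| ^ p))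
    (hbd : ∀ n, (∑' k : ℤ, (a k * |u n k - u n (k - 1)| ^ p + b k * |u n k| ^ p))
      ≤ M ^ p) :
    ∃ (φ : ℕ → ℕ) (v : ℤ → ℝ), StrictMono φ ∧
      Summable (fun k : ℤ => |v k| ^ p) ∧
      Tendsto (fun n : ℕ => (∑' k : ℤ, |u (φ n) k - v k| ^ p) ^ (1 / p))
        atTop (nhds 0) :=
  embedding_X_lp_compact_general p hp a b ha hb hbinf M u hsum hbd
end

section
/- Let p > 1 and let f : ℤ × ℝ → ℝ be continuous in the second variable satisfying (H3): lim_{t→0} f(k,t)/|t|^{p−1} = 0 uniformly in k ∈ ℤ. Then the functional Ψ(u) = ∑_{k∈ℤ} F(k,u(k)) is well-defined and continuously Fréchet differentiable on ℓ^p(ℤ), with derivative Ψ′(u)v = ∑_{k∈ℤ} f(k,u(k)) v(k) for all u, v ∈ ℓ^p(ℤ). -/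
/-!
Taking `ε = 1` in (H3) and letting `t → 0` gives `|f k t| ≤ |t| ^ (p - 1)` for `|t| < δ`, uniformly
in `k`, hence `|F k t| ≤ |t| ^ p` there. As `u k → 0` along the cofinite filter for `u ∈ ℓ^p`, this
makes `∑ F (k, u k)` summable and puts `N u := (f k (u k))ₖ` in `ℓ^q`, `p⁻¹ + q⁻¹ = 1`. The
Nemytskii operator `N : ℓ^p → ℓ^q` is continuous by dominated convergence, since off a finite set
`|f k (u' k) - f k (u k)| ^ q ≤ C (|u k| ^ p + |u' k - u k| ^ p)`.

The derivative at `u` is `v ↦ ∑ (N u)ₖ vₖ`. Bounding the integral by the maximum of the integrand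
on each interval, the remainder in direction `v` is at most `∑ |f k (u k + s k) - f k (u k)| |v k|`
for some `s` with `|s k| ≤ |v k|`, which Hölder bounds by `‖N (u + s) - N u‖ ‖v‖ = o(‖v‖)`. The
derivative is continuous because `N` is and the Hölder pairing `ℓ^q × ℓ^p → ℝ` is bounded bilinear.
-/

open Real Set Filter Topology
open scoped ENNReal

theorem tendsto_tsum_zero_of_le_add {α ι : Type*} {l : Filter α} {g e : α → ι → ℝ} {h : ι → ℝ}
    {S : Set ι} (hS : S.Finite) (hg : ∀ a k, 0 ≤ g a k) (hg_lim : ∀ k, Tendsto (g · k) l (𝓝 0))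
    (hh : Summable h) (he : ∀ a k, 0 ≤ e a k) (he_sum : ∀ a, Summable (e a))
    (he_lim : Tendsto (fun a => ∑' k, e a k) l (𝓝 0))
    (hle : ∀ᶠ a in l, ∀ k ∉ S, g a k ≤ h k + e a k) :
    Tendsto (fun a => ∑' k, g a k) l (𝓝 0) := by
  set H : ι → ℝ := fun k => |h k| + S.indicator 1 k
  have hH : ∀ k, 0 ≤ H k := fun k => add_nonneg (abs_nonneg _) (indicator_nonneg (by simp) k)
  have hH_sum : Summable H :=
    hh.abs.add (summable_of_ne_finset_zero (s := hS.toFinset) fun k hk => by simp_all)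
  have hleH : ∀ᶠ a in l, ∀ k, g a k ≤ H k + e a k := by
    have hS_le : ∀ᶠ a in l, ∀ k ∈ S, g a k ≤ 1 :=
      hS.eventually_all.2 fun k _ => ((hg_lim k).eventually_lt_const one_pos).mono fun _ => le_of_lt
    filter_upwards [hle, hS_le] with a hle hS_le k
    by_cases hk : k ∈ S
    · simp only [H, indicator_of_mem hk, Pi.one_apply]
      linarith [hS_le k hk, abs_nonneg (h k), he a k]
    · simp only [H, indicator_of_notMem hk, add_zero]
      linarith [hle k hk, le_abs_self (h k)]
  -- `g ≤ min g (2H) + 2e`, and the first summand is dominated by `2H`.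
  set d : α → ι → ℝ := fun a k => min (g a k) (2 * H k)
  have hd_nonneg : ∀ a k, 0 ≤ d a k := fun a k => le_min (hg a k) (by linarith [hH k])
  have hd_sum : ∀ a, Summable (d a) := fun a =>
    (hH_sum.mul_left 2).of_nonneg_of_le (hd_nonneg a) fun k => min_le_right _ _
  have hd_lim : Tendsto (fun a => ∑' k, d a k) l (𝓝 0) := by
    have := tendsto_tsum_of_dominated_convergence (hH_sum.mul_left 2)
      (fun k => (hg_lim k).min (tendsto_const_nhds (x := 2 * H k)))
      (Eventually.of_forall fun a k => by
        rw [Real.norm_of_nonneg (hd_nonneg a k)]; exact min_le_right _ _)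
    have hmin : ∀ k, min 0 (2 * H k) = 0 := fun k => min_eq_left (by linarith [hH k])
    simpa only [hmin, tsum_zero] using this
  have hbound : ∀ᶠ a in l, ∑' k, g a k ≤ ∑' k, d a k + 2 * ∑' k, e a k := by
    filter_upwards [hleH] with a ha
    have hpt : ∀ k, g a k ≤ d a k + 2 * e a k := fun k => by
      rcases le_total (e a k) (H k) with hek | hek
      · have : g a k ≤ 2 * H k := by linarith [ha k]
        simp only [d, min_eq_left this]; linarith [he a k]
      · linarith [ha k, hd_nonneg a k]
    have hde : Summable fun k => d a k + 2 * e a k := (hd_sum a).add ((he_sum a).mul_left 2)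
    rw [← tsum_mul_left, ← (hd_sum a).tsum_add ((he_sum a).mul_left 2)]
    exact (hde.of_nonneg_of_le (hg a) hpt).tsum_le_tsum hpt hde
  refine squeeze_zero' (Eventually.of_forall fun a => tsum_nonneg (hg a)) hbound ?_
  simpa using hd_lim.add (he_lim.const_mul 2)

theorem abs_le_abs_rpow_of_forall_div_lt_one {φ : ℝ → ℝ} (hφ : ContinuousAt φ 0) {r δ : ℝ}
    (hr : 0 < r) (h : ∀ t, t ≠ 0 → |t| < δ → |φ t| / |t| ^ r < 1) {t : ℝ} (ht : |t| < δ) :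
    |φ t| ≤ |t| ^ r := by
  have hne : ∀ t, t ≠ 0 → |t| < δ → |φ t| ≤ |t| ^ r := fun t h0 ht =>
    ((div_lt_one (by positivity)).1 (h t h0 ht)).le
  rcases eq_or_ne t 0 with rfl | ht0
  · have hlim : Tendsto (fun s : ℝ => |s| ^ r) (𝓝[≠] 0) (𝓝 (|0| ^ r)) :=
      ((continuous_abs.rpow_const fun _ => Or.inr hr.le).tendsto 0).mono_left nhdsWithin_le_nhds
    refine le_of_tendsto_of_tendsto ((continuous_abs.tendsto _).comp hφ |>.mono_left
      nhdsWithin_le_nhds) hlim ?_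
    filter_upwards [self_mem_nhdsWithin,
      nhdsWithin_le_nhds (Metric.ball_mem_nhds 0 (by simpa using ht))] with s hs0 hsδ
    exact hne s hs0 (by simpa using hsδ)
  · exact hne t ht0 ht

theorem abs_integral_le_abs_rpow_add_one {φ : ℝ → ℝ} {r δ t : ℝ} (hr : 0 ≤ r)
    (hφ : ∀ x, |x| < δ → |φ x| ≤ |x| ^ r) (ht : |t| < δ) :
    |∫ x in (0 : ℝ)..t, φ x| ≤ |t| ^ (r + 1) := by
  have hbound : ∀ x ∈ uIoc (0 : ℝ) t, ‖φ x‖ ≤ |t| ^ r := fun x hx => by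
    have hxt : |x| ≤ |t| := by
      simpa using Real.dist_le_of_mem_uIcc (uIoc_subset_uIcc hx) left_mem_uIcc
    exact (hφ x (hxt.trans_lt ht)).trans (rpow_le_rpow (abs_nonneg x) hxt hr)
  calc |∫ x in (0 : ℝ)..t, φ x| ≤ |t| ^ r * |t - 0| :=
        intervalIntegral.norm_integral_le_of_norm_le_const hbound
    _ = |t| ^ (r + 1) := by rw [sub_zero, rpow_add_one' (abs_nonneg t) (by linarith)]

theorem exists_abs_integral_sub_mul_le {φ : ℝ → ℝ} {a b : ℝ}
    (hφ : ContinuousOn φ (uIcc a (a + b))) :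
    ∃ s, |s| ≤ |b| ∧ |(∫ x in a..a + b, φ x) - φ a * b| ≤ |φ (a + s) - φ a| * |b| := by
  obtain ⟨ξ, hξ, hmax⟩ := isCompact_uIcc.exists_isMaxOn nonempty_uIcc
    ((hφ.sub continuousOn_const).abs)
  refine ⟨ξ - a, by simpa [Real.dist_eq] using Real.dist_le_of_mem_uIcc hξ left_mem_uIcc, ?_⟩
  have hint : (∫ x in a..a + b, φ x) - φ a * b = ∫ x in a..a + b, (φ x - φ a) := by
    rw [intervalIntegral.integral_sub hφ.intervalIntegrable intervalIntegrable_const,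
      intervalIntegral.integral_const, smul_eq_mul, add_sub_cancel_left, mul_comm]
  rw [hint, add_sub_cancel]
  have hbound : ∀ x ∈ uIoc a (a + b), ‖φ x - φ a‖ ≤ |φ ξ - φ a| := fun x hx =>
    hmax (uIoc_subset_uIcc hx)
  simpa using intervalIntegral.norm_integral_le_of_norm_le_const hbound

theorem abs_sub_rpow_le_of_abs_le_rpow {φ : ℝ → ℝ} {p r δ : ℝ} (hp : 1 ≤ p) (hr : 0 ≤ r)
    (hpr : (p - 1) * r = p)
    (hφ : ∀ t, |t| < δ → |φ t| ≤ |t| ^ (p - 1)) {x y : ℝ} (h : |x| + |y - x| < δ) :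
    |φ y - φ x| ^ r ≤ 2 ^ r * 2 ^ (p - 1) * (|x| ^ p + |y - x| ^ p) := by
  set m := |x| + |y - x|
  have hy : |y| ≤ m := by simpa [m, add_comm] using abs_add_le (y - x) x
  have hm : 0 ≤ m := by positivity
  have hdiff : |φ y - φ x| ≤ 2 * m ^ (p - 1) := by
    have hmon : ∀ t, |t| ≤ m → |φ t| ≤ m ^ (p - 1) := fun t ht =>
      (hφ t (ht.trans_lt h)).trans (rpow_le_rpow (abs_nonneg t) ht (by linarith))
    linarith [abs_sub (φ y) (φ x), hmon y hy, hmon x (le_add_of_nonneg_right (abs_nonneg _))]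
  calc |φ y - φ x| ^ r ≤ (2 * m ^ (p - 1)) ^ r := rpow_le_rpow (abs_nonneg _) hdiff hr
    _ = 2 ^ r * m ^ p := by rw [mul_rpow zero_le_two (by positivity), ← rpow_mul hm, hpr]
    _ ≤ 2 ^ r * (2 ^ (p - 1) * (|x| ^ p + |y - x| ^ p)) := by
        gcongr
        exact_mod_cast NNReal.rpow_add_le_mul_rpow_add_rpow ⟨|x|, abs_nonneg x⟩
          ⟨|y - x|, abs_nonneg _⟩ hp
    _ = _ := by ring

theorem lp.tendsto_norm_cofinite_zero {ι : Type*} {E : ι → Type*} [∀ i, NormedAddCommGroup (E i)]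
    {p : ℝ≥0∞} (hp : 0 < p.toReal) (u : lp E p) : Tendsto (fun i => ‖u i‖) cofinite (𝓝 0) := by
  have h := ((lp.memℓp u).summable hp).tendsto_cofinite_zero.rpow_const
    (p := p.toReal⁻¹) (Or.inr (by positivity))
  simpa [rpow_rpow_inv (norm_nonneg _) hp.ne', zero_rpow (inv_pos.2 hp).ne'] using h

theorem lp.summable_comp_of_abs_le_rpow {ι : Type*} {p : ℝ≥0∞} (hp : 0 < p.toReal)
    {g : ι → ℝ → ℝ} {δ : ℝ} (hδ : 0 < δ) (hg : ∀ k t, |t| < δ → |g k t| ≤ |t| ^ p.toReal)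
    (u : lp (fun _ : ι => ℝ) p) : Summable fun k => g k (u k) := by
  refine ((lp.memℓp u).summable hp).of_norm_bounded_eventually ?_
  filter_upwards [(lp.tendsto_norm_cofinite_zero hp u).eventually_lt_const hδ] with k hk
  exact hg k (u k) hk


section Nemytskii

variable {ι : Type*} {p q : ℝ≥0∞} {f : ι → ℝ → ℝ} {δ : ℝ}

variable (f) in
def nemytskii (hmem : ∀ u : lp (fun _ : ι => ℝ) p, Memℓp (fun k => f k (u k)) q)
    (u : lp (fun _ : ι => ℝ) p) : lp (fun _ : ι => ℝ) q :=
  ⟨fun k => f k (u k), hmem u⟩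

@[simp]
theorem nemytskii_apply (hmem : ∀ u : lp (fun _ : ι => ℝ) p, Memℓp (fun k => f k (u k)) q)
    (u : lp (fun _ : ι => ℝ) p) (k : ι) : nemytskii f hmem u k = f k (u k) :=
  rfl

variable [p.HolderConjugate q]

theorem memℓp_comp_of_abs_le_rpow (hp : 1 < p.toReal) (hδ : 0 < δ)
    (hgrowth : ∀ k t, |t| < δ → |f k t| ≤ |t| ^ (p.toReal - 1)) (u : lp (fun _ : ι => ℝ) p) :
    Memℓp (fun k => f k (u k)) q := by
  have hpq : p.toReal.HolderConjugate q.toReal := ENNReal.HolderConjugate.toReal hp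
  have hbound : ∀ k t, |t| < δ → |‖f k t‖ ^ q.toReal| ≤ |t| ^ p.toReal := fun k t ht => by
    rw [abs_of_nonneg (by positivity), Real.norm_eq_abs]
    calc |f k t| ^ q.toReal ≤ (|t| ^ (p.toReal - 1)) ^ q.toReal :=
          rpow_le_rpow (abs_nonneg _) (hgrowth k t ht) hpq.symm.nonneg
      _ = |t| ^ p.toReal := by rw [← rpow_mul (abs_nonneg t), hpq.sub_one_mul_conj]
  exact memℓp_gen (lp.summable_comp_of_abs_le_rpow (by linarith) hδ hbound u)

variable [Fact (1 ≤ p)]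

theorem tendsto_tsum_abs_sub_rpow (hp : 1 < p.toReal) (hf : ∀ k, Continuous (f k)) (hδ : 0 < δ)
    (hgrowth : ∀ k t, |t| < δ → |f k t| ≤ |t| ^ (p.toReal - 1)) (u : lp (fun _ : ι => ℝ) p) :
    Tendsto (fun u' : lp (fun _ : ι => ℝ) p => ∑' k, |f k (u' k) - f k (u k)| ^ q.toReal)
      (𝓝 u) (𝓝 0) := by
  have hpq : p.toReal.HolderConjugate q.toReal := ENNReal.HolderConjugate.toReal hp
  have hp0 : 0 < p.toReal := hpq.pos
  set C : ℝ := 2 ^ q.toReal * 2 ^ (p.toReal - 1)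
  set S : Set ι := {k | ¬ ‖u k‖ < δ / 2}
  have hS : S.Finite :=
    eventually_cofinite.1 ((lp.tendsto_norm_cofinite_zero hp0 u).eventually_lt_const (half_pos hδ))
  have hsub : ∀ u' : lp (fun _ : ι => ℝ) p, ∀ k, ‖(u' - u) k‖ = |u' k - u k| := fun u' k => by
    simp [Real.norm_eq_abs]
  refine tendsto_tsum_zero_of_le_add hS (h := fun k => C * |u k| ^ p.toReal)
    (e := fun u' k => C * |u' k - u k| ^ p.toReal) (fun _ _ => by positivity) (fun k => ?_)
    (((lp.memℓp u).summable hp0).mul_left C) (fun _ _ => by positivity) (fun u' => ?_) ?_ ?_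
  · have h := ((((hf k).comp (lp.lipschitzWith_one_eval p k).continuous).tendsto u).sub_const
      (f k (u k))).abs.rpow_const (p := q.toReal) (Or.inr hpq.symm.nonneg)
    simpa [zero_rpow hpq.symm.pos.ne'] using h
  · simpa only [hsub] using ((lp.memℓp (u' - u)).summable hp0).mul_left C
  · have h := ((tendsto_norm_sub_self u).rpow_const (p := p.toReal) (Or.inr hp0.le)).const_mul C
    simpa [hsub, lp.norm_rpow_eq_tsum hp0, tsum_mul_left, zero_rpow hp0.ne'] using h
  · filter_upwards [(tendsto_norm_sub_self u).eventually_lt_const (half_pos hδ)] with u' hu' k hk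
    have hsmall : |u k| + |u' k - u k| < δ := by
      have hu : |u k| < δ / 2 := not_not.1 hk
      have hu'k := lp.norm_apply_le_norm (zero_lt_one.trans_le Fact.out).ne' (u' - u) k
      rw [hsub] at hu'k
      linarith
    rw [← mul_add]
    exact abs_sub_rpow_le_of_abs_le_rpow hp.le hpq.symm.nonneg hpq.sub_one_mul_conj (hgrowth k)
      hsmall

variable [Fact (1 ≤ q)]

theorem continuous_nemytskii (hp : 1 < p.toReal) (hf : ∀ k, Continuous (f k)) (hδ : 0 < δ)
    (hgrowth : ∀ k t, |t| < δ → |f k t| ≤ |t| ^ (p.toReal - 1))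
    (hmem : ∀ u : lp (fun _ : ι => ℝ) p, Memℓp (fun k => f k (u k)) q) :
    Continuous (nemytskii f hmem) := by
  have hq : 0 < q.toReal := (ENNReal.HolderConjugate.toReal hp (q := q)).symm.pos
  refine continuous_iff_continuousAt.2 fun u => tendsto_iff_norm_sub_tendsto_zero.2 ?_
  have h := (tendsto_tsum_abs_sub_rpow (q := q) hp hf hδ hgrowth u).rpow_const (p := 1 / q.toReal)
    (Or.inr (by positivity))
  simpa [lp.norm_eq_tsum_rpow hq, zero_rpow (inv_pos.2 hq).ne', Real.norm_eq_abs] using h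

end Nemytskii

section Derivative

variable {ι : Type*} {p q : ℝ≥0∞} {f F : ι → ℝ → ℝ} {δ : ℝ}

theorem summable_comp_of_eq_integral (hp : 1 ≤ p.toReal) (hδ : 0 < δ)
    (hgrowth : ∀ k t, |t| < δ → |f k t| ≤ |t| ^ (p.toReal - 1))
    (hF : ∀ k t, F k t = ∫ s in (0 : ℝ)..t, f k s) (u : lp (fun _ : ι => ℝ) p) :
    Summable fun k => F k (u k) :=
  lp.summable_comp_of_abs_le_rpow (by linarith) hδ (fun k t ht => by
    simpa [hF] using abs_integral_le_abs_rpow_add_one (by linarith) (hgrowth k) ht) u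

theorem exists_norm_le_forall_abs_remainder_le [Fact (1 ≤ p)] (hf : ∀ k, Continuous (f k))
    (hF : ∀ k t, F k t = ∫ s in (0 : ℝ)..t, f k s) (u v : lp (fun _ : ι => ℝ) p) :
    ∃ s : lp (fun _ : ι => ℝ) p, ‖s‖ ≤ ‖v‖ ∧ ∀ k,
      |F k (u k + v k) - F k (u k) - f k (u k) * v k| ≤ |f k (u k + s k) - f k (u k)| * |v k| := by
  have hpt : ∀ k, ∃ s, |s| ≤ |v k| ∧
      |F k (u k + v k) - F k (u k) - f k (u k) * v k| ≤ |f k (u k + s) - f k (u k)| * |v k| :=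
    fun k => by
      rw [hF, hF, intervalIntegral.integral_interval_sub_left ((hf k).intervalIntegrable _ _)
        ((hf k).intervalIntegrable _ _)]
      exact exists_abs_integral_sub_mul_le (hf k).continuousOn
  choose s hs hR using hpt
  have hs' : ∀ k, ‖s k‖ ≤ ‖v k‖ := hs
  exact ⟨⟨s, (lp.memℓp v).mono' hs'⟩, lp.norm_mono (zero_lt_one.trans_le Fact.out).ne' hs', hR⟩

variable (ι p q) in
noncomputable def lpPairing [Fact (1 ≤ p)] [Fact (1 ≤ q)] [p.HolderConjugate q] :
    lp (fun _ : ι => ℝ) q →L[ℝ] lp (fun _ : ι => ℝ) p →L[ℝ] ℝ :=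
  lp.dualPairing q p (fun _ => ContinuousLinearMap.mul ℝ ℝ) (K := 1)
    fun _ => by simp

variable [Fact (1 ≤ p)] [Fact (1 ≤ q)] [p.HolderConjugate q]

theorem lpPairing_apply (a : lp (fun _ : ι => ℝ) q) (v : lp (fun _ : ι => ℝ) p) :
    lpPairing ι p q a v = ∑' k, a k * v k :=
  rfl

theorem hasFDerivAt_tsum_comp (hp : 1 < p.toReal) (hf : ∀ k, Continuous (f k)) (hδ : 0 < δ)
    (hgrowth : ∀ k t, |t| < δ → |f k t| ≤ |t| ^ (p.toReal - 1))
    (hF : ∀ k t, F k t = ∫ s in (0 : ℝ)..t, f k s)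
    (hmem : ∀ u : lp (fun _ : ι => ℝ) p, Memℓp (fun k => f k (u k)) q) (u : lp (fun _ : ι => ℝ) p) :
    HasFDerivAt (fun u : lp (fun _ : ι => ℝ) p => ∑' k, F k (u k))
      (lpPairing ι p q (nemytskii f hmem u)) u := by
  have hpq : q.toReal.HolderConjugate p.toReal := (ENNReal.HolderConjugate.toReal hp).symm
  have hFsum := summable_comp_of_eq_integral hp.le hδ hgrowth hF
  rw [hasFDerivAt_iff_isLittleO_nhds_zero, Asymptotics.isLittleO_iff]
  intro c hc
  obtain ⟨η, hη, hNη⟩ :=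
    Metric.continuousAt_iff.1 (continuous_nemytskii hp hf hδ hgrowth hmem).continuousAt c hc
  filter_upwards [Metric.ball_mem_nhds 0 hη] with v hv
  obtain ⟨s, hsv, hR⟩ := exists_norm_le_forall_abs_remainder_le hf hF u v
  set a := nemytskii f hmem (u + s) - nemytskii f hmem u
  have ha : ‖a‖ < c := by
    simpa [a, dist_eq_norm] using hNη (x := u + s) (by simpa using hsv.trans_lt (by simpa using hv))
  obtain ⟨hav, hav_le⟩ := lp.tsum_mul_le_mul_norm hpq a v
  have hfv : Summable fun k => f k (u k) * v k :=
    .of_norm (by simpa using lp.summable_mul hpq (nemytskii f hmem u) v)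
  have hremainder : ∑' k, F k ((u + v) k) - ∑' k, F k (u k) - lpPairing ι p q (nemytskii f hmem u) v
      = ∑' k, (F k (u k + v k) - F k (u k) - f k (u k) * v k) := by
    have hFuv : Summable fun k => F k (u k + v k) := by simpa using hFsum (u + v)
    simp only [lp.coeFn_add, Pi.add_apply, lpPairing_apply, nemytskii_apply]
    rw [← hFuv.tsum_sub (hFsum u), ← (hFuv.sub (hFsum u)).tsum_sub hfv]
  have hR' : ∀ k, ‖F k (u k + v k) - F k (u k) - f k (u k) * v k‖ ≤ ‖a k‖ * ‖v k‖ := fun k => by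
    simpa [a] using hR k
  calc ‖∑' k, F k ((u + v) k) - ∑' k, F k (u k) - lpPairing ι p q (nemytskii f hmem u) v‖
      = ‖∑' k, (F k (u k + v k) - F k (u k) - f k (u k) * v k)‖ := by rw [hremainder]
    _ ≤ ∑' k, ‖a k‖ * ‖v k‖ := tsum_of_norm_bounded hav.hasSum hR'
    _ ≤ ‖a‖ * ‖v‖ := hav_le
    _ ≤ c * ‖v‖ := by gcongr

end Derivative

/-- Under (H3), the functional `Ψ(u) = ∑ₖ F(k, u(k))` is well defined and
continuously Fréchet differentiable on `ℓ^p(ℤ)`, with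
`Ψ′(u)v = ∑ₖ f(k, u(k)) v(k)`. -/
theorem Psi_C1_on_lp
    (p : ℝ) (hp : 1 < p) [Fact ((1 : ℝ≥0∞) ≤ ENNReal.ofReal p)]
    (f : ℤ → ℝ → ℝ) (hf : ∀ k, Continuous (f k))
    (F : ℤ → ℝ → ℝ) (hF : ∀ k t, F k t = ∫ s in (0:ℝ)..t, f k s)
    (H3 : ∀ ε : ℝ, 0 < ε → ∃ δ : ℝ, 0 < δ ∧ ∀ k : ℤ, ∀ t : ℝ,
      t ≠ 0 → |t| < δ → |f k t| / |t| ^ (p - 1) < ε)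
    (Ψ : lp (fun _ : ℤ => ℝ) (ENNReal.ofReal p) → ℝ)
    (hΨ : ∀ u, Ψ u = ∑' k : ℤ, F k (u k)) :
    (∀ u : lp (fun _ : ℤ => ℝ) (ENNReal.ofReal p),
        Summable (fun k : ℤ => F k (u k))) ∧
    ContDiff ℝ 1 Ψ ∧
    ∀ u v : lp (fun _ : ℤ => ℝ) (ENNReal.ofReal p),
      fderiv ℝ Ψ u v = ∑' k : ℤ, f k (u k) * v k := by
  obtain rfl : Ψ = fun u => ∑' k, F k (u k) := funext hΨ
  have : (ENNReal.ofReal p).HolderConjugate (ENNReal.ofReal p).conjExponent :=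
    .conjExponent Fact.out
  have : Fact (1 ≤ (ENNReal.ofReal p).conjExponent) :=
    ⟨ENNReal.HolderConjugate.one_le _ (ENNReal.ofReal p)⟩
  have hP : (ENNReal.ofReal p).toReal = p := ENNReal.toReal_ofReal (by linarith)
  obtain ⟨δ, hδ, hH3⟩ := H3 1 one_pos
  have hgrowth : ∀ k t, |t| < δ → |f k t| ≤ |t| ^ ((ENNReal.ofReal p).toReal - 1) :=
    fun k t ht => by
      rw [hP]
      exact abs_le_abs_rpow_of_forall_div_lt_one (hf k).continuousAt (by linarith) (hH3 k) ht
  have hP1 : 1 < (ENNReal.ofReal p).toReal := by rwa [hP]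
  have hmem := memℓp_comp_of_abs_le_rpow (q := (ENNReal.ofReal p).conjExponent) hP1 hδ hgrowth
  have hderiv := hasFDerivAt_tsum_comp hP1 hf hδ hgrowth hF hmem
  have hfderiv := funext fun u => (hderiv u).fderiv
  refine ⟨summable_comp_of_eq_integral hP1.le hδ hgrowth hF, ?_, fun u v => ?_⟩
  · refine contDiff_one_iff_fderiv.2 ⟨fun u => (hderiv u).differentiableAt, ?_⟩
    rw [hfderiv]
    exact (lpPairing _ _ _).continuous.comp (continuous_nemytskii hP1 hf hδ hgrowth hmem)
  · rw [hfderiv, lpPairing_apply]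
    rfl
end

section
/- Let p > 1, λ > 0, let a, b : ℤ → (0,+∞) satisfy (B): b(k) ≥ b₀ > 0 for all k and b(k) → +∞ as |k| → +∞, and let f : ℤ × ℝ → ℝ be continuous in the second variable satisfying (H3): lim_{t→0} f(k,t)/|t|^{p−1} = 0 uniformly in k ∈ ℤ. Suppose u ∈ X satisfies ∑_{k∈ℤ}[a(k)φ_p(Δu(k−1))Δv(k−1) + b(k)φ_p(u(k))v(k) − λ f(k,u(k))v(k)] = 0 for every finitely supported v : ℤ → ℝ. Then u satisfies −Δ(a(k)φ_p(Δu(k−1))) + b(k)φ_p(u(k)) = λ f(k,u(k)) for all k ∈ ℤ and u(k) → 0 as |k| → ∞, i.e., u is a homoclinic solution of the problem. -/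
open Real Set Filter Topology

/-- `φ_p(t) = |t|^{p−2} t`. -/
noncomputable def phi_p (p t : ℝ) : ℝ := |t| ^ (p - 2) * t

/-! Testing the weak equation against the unit mass at `k₀` isolates the equation at `k₀`;
the decay of `u` follows from the summability of `b₀ |u k|^p ≤ b k |u k|^p`. -/

lemma tsum_mul_sub_shift_add_mul_single (A B : ℤ → ℝ) (k₀ : ℤ) :
    ∑' k, (A k * ((Pi.single k₀ 1 : ℤ → ℝ) k - (Pi.single k₀ 1 : ℤ → ℝ) (k - 1))
      + B k * (Pi.single k₀ 1 : ℤ → ℝ) k)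
      = A k₀ - A (k₀ + 1) + B k₀ := by
  rw [tsum_eq_sum (s := {k₀, k₀ + 1}) fun k hk => ?_, Finset.sum_pair (by omega)]
  · simp only [Pi.single_eq_same, ne_eq, sub_eq_self, one_ne_zero, not_false_eq_true,
      Pi.single_eq_of_ne, sub_zero, mul_one, add_eq_left, add_sub_cancel_right, zero_sub, mul_neg,
      mul_zero, add_zero]
    ring
  · simp only [Finset.mem_insert, Finset.mem_singleton, not_or] at hk
    simp [hk.1, show k - 1 ≠ k₀ by omega]

lemma tendsto_cofinite_zero_of_summable_abs_rpow {ι : Type*} {u : ι → ℝ} {p : ℝ} (hp : 0 < p)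
    (hu : Summable fun i => |u i| ^ p) : Tendsto u cofinite (𝓝 0) := by
  have h := hu.tendsto_cofinite_zero.rpow_const (Or.inr (inv_nonneg.mpr hp.le))
  simp_rw [← Real.rpow_mul (abs_nonneg _), mul_inv_cancel₀ hp.ne', Real.rpow_one,
    Real.zero_rpow (inv_ne_zero hp.ne')] at h
  exact (tendsto_zero_iff_abs_tendsto_zero u).mpr h

lemma summable_abs_rpow_of_summable_energy {p b₀ : ℝ} {a b u : ℤ → ℝ} (ha : ∀ k, 0 ≤ a k)
    (hb₀ : 0 < b₀) (hbb₀ : ∀ k, b₀ ≤ b k)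
    (hu : Summable fun k => a k * |u k - u (k - 1)| ^ p + b k * |u k| ^ p) :
    Summable fun k => |u k| ^ p := by
  refine (summable_mul_left_iff hb₀.ne').mp
    (hu.of_nonneg_of_le (fun k => by positivity) fun k => ?_)
  have := mul_le_mul_of_nonneg_right (hbb₀ k) (Real.rpow_nonneg (abs_nonneg (u k)) p)
  have := mul_nonneg (ha k) (Real.rpow_nonneg (abs_nonneg (u k - u (k - 1))) p)
  linarith

theorem critical_point_is_homoclinic_solution_general
    (p lam : ℝ) (hp : 1 < p)
    (a b : ℤ → ℝ) (ha : ∀ k, 0 < a k)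
    (b₀ : ℝ) (hb₀ : 0 < b₀) (hbb₀ : ∀ k, b₀ ≤ b k)
    (f : ℤ → ℝ → ℝ)
    (u : ℤ → ℝ)
    (hu : Summable (fun k : ℤ =>
      a k * |u k - u (k - 1)| ^ p + b k * |u k| ^ p))
    (hweak : ∀ v : ℤ → ℝ, (Function.support v).Finite →
      (∑' k : ℤ, (a k * phi_p p (u k - u (k - 1)) * (v k - v (k - 1))
        + b k * phi_p p (u k) * v k - lam * f k (u k) * v k)) = 0) :
    (∀ k : ℤ,
      -(a (k + 1) * phi_p p (u (k + 1) - u k) - a k * phi_p p (u k - u (k - 1)))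
        + b k * phi_p p (u k) = lam * f k (u k)) ∧
    Tendsto u (cocompact ℤ) (𝓝 0) := by
  refine ⟨fun k₀ => ?_, ?_⟩
  · have h := hweak (Pi.single k₀ 1)
      ((finite_singleton k₀).subset Pi.support_single_subset)
    simp_rw [add_sub_assoc, ← sub_mul] at h
    rw [tsum_mul_sub_shift_add_mul_single, add_sub_cancel_right] at h
    linarith
  · rw [cocompact_eq_cofinite]
    exact tendsto_cofinite_zero_of_summable_abs_rpow (by linarith)
      (summable_abs_rpow_of_summable_energy (fun k => (ha k).le) hb₀ hbb₀ hu)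

/-- Critical points are homoclinic solutions: if `u ∈ X` and the weak form of
the Euler–Lagrange equation holds against every finitely supported test
function `v`, then `u` solves
`−Δ(a(k)φ_p(Δu(k−1))) + b(k)φ_p(u(k)) = λ f(k,u(k))` for all `k ∈ ℤ`
and `u(k) → 0` as `|k| → ∞`. -/
theorem critical_point_is_homoclinic_solution
    (p lam : ℝ) (hp : 1 < p) (hlam : 0 < lam)
    (a b : ℤ → ℝ) (ha : ∀ k, 0 < a k) (hb : ∀ k, 0 < b k)
    (b₀ : ℝ) (hb₀ : 0 < b₀) (hbb₀ : ∀ k, b₀ ≤ b k)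
    (hbinf : Tendsto b (cocompact ℤ) atTop)
    (f : ℤ → ℝ → ℝ) (hf : ∀ k, Continuous (f k))
    (H3 : ∀ ε : ℝ, 0 < ε → ∃ δ : ℝ, 0 < δ ∧ ∀ k : ℤ, ∀ t : ℝ,
      t ≠ 0 → |t| < δ → |f k t| / |t| ^ (p - 1) < ε)
    (u : ℤ → ℝ)
    (hu : Summable (fun k : ℤ =>
      a k * |u k - u (k - 1)| ^ p + b k * |u k| ^ p))
    (hweak : ∀ v : ℤ → ℝ, (Function.support v).Finite →
      (∑' k : ℤ, (a k * phi_p p (u k - u (k - 1)) * (v k - v (k - 1))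
        + b k * phi_p p (u k) * v k - lam * f k (u k) * v k)) = 0) :
    (∀ k : ℤ,
      -(a (k + 1) * phi_p p (u (k + 1) - u k) - a k * phi_p p (u k - u (k - 1)))
        + b k * phi_p p (u k) = lam * f k (u k)) ∧
    Tendsto u (cocompact ℤ) (𝓝 0) :=
  critical_point_is_homoclinic_solution_general p lam hp a b ha b₀ hb₀ hbb₀ f u hu hweak
end

section
/- Let p > 1 and ν ≥ 1, and define g : ℝ → ℝ by g(t) = |t|^{p−2} t · ln(1 + |t|^ν), with primitive G(t) = ∫₀ᵗ g(s) ds. Then g satisfies condition (H5) with σ = 1: for all t ∈ ℝ and s ∈ [0,1], g(st)·(st) − pG(st) ≤ g(t)·t − pG(t). -/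
/-!
Write `L(r) = ln(1 + r^ν)`, which is monotone on `[0, ∞)`. Since `g` is odd, `G` is even, and
`g(t)t - pG(t) = |t|^p L(|t|) - p ∫₀^{|t|} r^{p-1} L(r) dr` only depends on `|t|`. This is
monotone in `|t|`: for `0 ≤ u ≤ v`, monotonicity of `L` gives
`p ∫ᵤᵛ r^{p-1} L(r) dr ≤ (v^p - u^p) L(v)` and `u^p L(u) ≤ u^p L(v)`, which add up to the
increment from `u` to `v` being nonnegative.
-/

open Real Set

theorem mul_integral_rpow_mul_le {p : ℝ} (hp : 0 < p) {L : ℝ → ℝ}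
    (hLc : ContinuousOn L (Ici 0)) (hLm : MonotoneOn L (Ici 0)) {u v : ℝ}
    (hu : 0 ≤ u) (huv : u ≤ v) :
    p * ∫ r in u..v, r ^ (p - 1) * L r ≤ (v ^ p - u ^ p) * L v := by
  have hsub : uIcc u v ⊆ Ici 0 := by
    rw [uIcc_of_le huv]; exact fun x hx => hu.trans hx.1
  have hpow : IntervalIntegrable (fun r : ℝ => r ^ (p - 1)) MeasureTheory.volume u v :=
    intervalIntegral.intervalIntegrable_rpow' (by linarith)
  have hle : ∫ r in u..v, r ^ (p - 1) * L r ≤ ∫ r in u..v, r ^ (p - 1) * L v := by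
    refine intervalIntegral.integral_mono_on huv (hpow.mul_continuousOn (hLc.mono hsub))
      (hpow.mul_const _) fun r hr => ?_
    have hr0 : 0 ≤ r := hu.trans hr.1
    exact mul_le_mul_of_nonneg_left (hLm hr0 (hu.trans huv) hr.2) (rpow_nonneg hr0 _)
  have heval : ∫ r in u..v, r ^ (p - 1) * L v = (v ^ p - u ^ p) / p * L v := by
    rw [intervalIntegral.integral_mul_const, integral_rpow (Or.inl (by linarith)),
      sub_add_cancel]
  calc p * ∫ r in u..v, r ^ (p - 1) * L r
      ≤ p * ((v ^ p - u ^ p) / p * L v) := by rw [← heval]; gcongr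
    _ = (v ^ p - u ^ p) * L v := by field_simp

theorem monotoneOn_rpow_mul_sub_integral {p : ℝ} (hp : 0 < p) {L : ℝ → ℝ}
    (hLc : ContinuousOn L (Ici 0)) (hLm : MonotoneOn L (Ici 0)) :
    MonotoneOn (fun u => u ^ p * L u - p * ∫ r in (0 : ℝ)..u, r ^ (p - 1) * L r)
      (Ici 0) := by
  intro u hu v hv huv
  have hint : ∀ {a b : ℝ}, 0 ≤ a → 0 ≤ b →
      IntervalIntegrable (fun r : ℝ => r ^ (p - 1) * L r) MeasureTheory.volume a b :=
    fun ha hb => (intervalIntegral.intervalIntegrable_rpow' (by linarith)).mul_continuousOn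
      (hLc.mono fun _ hx => (le_min ha hb).trans hx.1)
  have hsplit := intervalIntegral.integral_add_adjacent_intervals
    (hint le_rfl (show (0 : ℝ) ≤ u from hu)) (hint hu hv)
  have hmid := mul_integral_rpow_mul_le hp hLc hLm hu huv
  have hLuv : u ^ p * L u ≤ u ^ p * L v :=
    mul_le_mul_of_nonneg_left (hLm hu hv huv) (rpow_nonneg hu _)
  simp only [← hsplit]
  linarith

theorem integral_zero_neg_of_odd {f : ℝ → ℝ} (hf : ∀ x, f (-x) = -f x) (t : ℝ) :
    ∫ x in (0 : ℝ)..-t, f x = ∫ x in (0 : ℝ)..t, f x := by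
  have h := intervalIntegral.integral_comp_neg (a := 0) (b := t) f
  simp only [hf, intervalIntegral.integral_neg, neg_zero] at h
  rw [intervalIntegral.integral_symm, ← h, neg_neg]

theorem integral_zero_abs_of_odd {f : ℝ → ℝ} (hf : ∀ x, f (-x) = -f x) (t : ℝ) :
    ∫ x in (0 : ℝ)..|t|, f x = ∫ x in (0 : ℝ)..t, f x := by
  rcases abs_choice t with h | h <;> rw [h]
  exact integral_zero_neg_of_odd hf t

theorem rpow_sub_two_mul_self {p r : ℝ} (hr : 0 ≤ r) (hp : p ≠ 1) :
    r ^ (p - 2) * r = r ^ (p - 1) := by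
  rw [← rpow_add_one' hr (by contrapose! hp; linarith)]
  ring_nf

theorem abs_rpow_sub_two_mul_self_mul_self {p : ℝ} (hp0 : p ≠ 0) (hp1 : p ≠ 1) (t : ℝ) :
    |t| ^ (p - 2) * t * t = |t| ^ p := by
  rw [mul_assoc, ← abs_mul_abs_self, ← mul_assoc, rpow_sub_two_mul_self (abs_nonneg t) hp1,
    ← rpow_add_one' (abs_nonneg t) (by simpa using hp0), sub_add_cancel]

theorem continuousOn_log_one_add_rpow {ν : ℝ} (hν : 0 < ν) :
    ContinuousOn (fun r : ℝ => log (1 + r ^ ν)) (Ici 0) :=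
  (continuousOn_const.add (continuousOn_id.rpow_const fun _ _ => Or.inr hν.le)).log
    fun r hr => by
      have := rpow_nonneg (show (0 : ℝ) ≤ r from hr) ν
      simp only [Pi.add_apply, id]
      linarith

theorem monotoneOn_log_one_add_rpow {ν : ℝ} (hν : 0 < ν) :
    MonotoneOn (fun r : ℝ => log (1 + r ^ ν)) (Ici 0) := fun u hu _ _ huv =>
  log_le_log (by have := rpow_nonneg (show (0 : ℝ) ≤ u from hu) ν; linarith) (by gcongr)

/-- The model nonlinearity `g(t) = |t|^{p−2} t · ln(1 + |t|^ν)` satisfies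
condition (H5) with `σ = 1`: `𝓖(st) ≤ 𝓖(t)` for `s ∈ [0,1]`, where
`𝓖(t) = g(t)·t − p·G(t)` and `G` is the primitive of `g`. -/
theorem example_satisfies_H5
    (p ν : ℝ) (hp : 1 < p) (hν : 1 ≤ ν)
    (g : ℝ → ℝ) (hg : ∀ t, g t = |t| ^ (p - 2) * t * Real.log (1 + |t| ^ ν))
    (G : ℝ → ℝ) (hG : ∀ t, G t = ∫ s in (0:ℝ)..t, g s) :
    ∀ t : ℝ, ∀ s ∈ Icc (0:ℝ) 1,
      g (s * t) * (s * t) - p * G (s * t) ≤ g t * t - p * G t := by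
  set L : ℝ → ℝ := fun r => log (1 + r ^ ν)
  have hgt : ∀ t, g t * t = |t| ^ p * L |t| := fun t => by
    rw [hg, mul_right_comm, abs_rpow_sub_two_mul_self_mul_self (by linarith) hp.ne']
  have hG_abs : ∀ t, G t = ∫ r in (0 : ℝ)..|t|, r ^ (p - 1) * L r := fun t => by
    rw [hG, ← integral_zero_abs_of_odd (fun x => by simp only [hg, abs_neg]; ring)]
    refine intervalIntegral.integral_congr fun r hr => ?_
    have hr0 : 0 ≤ r := by rw [uIcc_of_le (abs_nonneg t)] at hr; exact hr.1
    simp only [hg, abs_of_nonneg hr0, rpow_sub_two_mul_self hr0 hp.ne', L]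
  intro t s ⟨hs0, hs1⟩
  rw [hgt, hgt, hG_abs, hG_abs, abs_mul, abs_of_nonneg hs0]
  exact monotoneOn_rpow_mul_sub_integral (by linarith)
    (continuousOn_log_one_add_rpow (by linarith)) (monotoneOn_log_one_add_rpow (by linarith))
    (mul_nonneg hs0 (abs_nonneg t)) (abs_nonneg t)
    (mul_le_of_le_one_left (abs_nonneg t) hs1)
end

section
/- Let p > 1 and ν ≥ 1, and define g : ℝ → ℝ by g(t) = |t|^{p−2} t · ln(1 + |t|^ν), with primitive G(t) = ∫₀ᵗ g(s) ds. Then g does not satisfy the Ambrosetti–Rabinowitz condition: there do not exist μ′ > p and R > 0 such that 0 < μ′ G(t) ≤ g(t) t for all |t| ≥ R. -/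
/-!
For `t > 0` put `L(t) = log (1 + t ^ ν)`, so that `g t * t = t ^ p * L(t)`. Since
`L(t) - L(s) ≤ ν log (t / s) ≤ ν (t / s - 1)` for `0 < s ≤ t`, integrating
`g s ≥ s ^ (p - 1) (L(t) + ν) - ν t s ^ (p - 2)` over `[0, t]` gives
`G t ≥ t ^ p (L(t) / p - C)` with `C = ν / (p (p - 1))`. The Ambrosetti–Rabinowitz
inequality `μ' G t ≤ g t * t` then forces `(μ' / p - 1) L(t) ≤ μ' C`, which fails for large
`t` because `L(t) → ∞`.
-/

open Real Set MeasureTheory Filter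

lemma log_one_add_rpow_sub_log_one_add_rpow_le {ν s t : ℝ} (hν : 0 ≤ ν) (hs : 0 < s)
    (hst : s ≤ t) : log (1 + t ^ ν) - log (1 + s ^ ν) ≤ ν * (t / s - 1) := by
  have ht : 0 < t := hs.trans_le hst
  have hsν : 0 < s ^ ν := rpow_pos_of_pos hs ν
  have hstν : s ^ ν ≤ t ^ ν := rpow_le_rpow hs.le hst hν
  have hratio : (1 + t ^ ν) / (1 + s ^ ν) ≤ (t / s) ^ ν := by
    rw [div_rpow ht.le hs.le, div_le_div_iff₀ (by positivity) hsν]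
    nlinarith
  calc log (1 + t ^ ν) - log (1 + s ^ ν)
      = log ((1 + t ^ ν) / (1 + s ^ ν)) := (log_div (by positivity) (by positivity)).symm
    _ ≤ log ((t / s) ^ ν) := log_le_log (by positivity) hratio
    _ = ν * log (t / s) := log_rpow (by positivity) ν
    _ ≤ ν * (t / s - 1) := mul_le_mul_of_nonneg_left (log_le_sub_one_of_pos (by positivity)) hν

lemma rpow_sub_one_mul_log_one_add_rpow_ge {p ν s t : ℝ} (hν : 0 ≤ ν) (hs : 0 < s)
    (hst : s ≤ t) :
    (log (1 + t ^ ν) + ν) * s ^ (p - 1) - ν * t * s ^ (p - 2)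
      ≤ s ^ (p - 1) * log (1 + s ^ ν) := by
  have hlog := log_one_add_rpow_sub_log_one_add_rpow_le hν hs hst
  have hpow : s ^ (p - 1) = s ^ (p - 2) * s := by
    rw [← rpow_add_one hs.ne']
    ring_nf
  have key : ν * (t / s - 1) * s ^ (p - 1) = ν * t * s ^ (p - 2) - ν * s ^ (p - 1) := by
    rw [hpow]
    field_simp
  linarith [mul_le_mul_of_nonneg_right hlog (rpow_pos_of_pos hs (p - 1)).le]

lemma integral_rpow_sub_one_mul_log_one_add_rpow_ge {p ν t : ℝ} (hp : 1 < p) (hν : 0 ≤ ν)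
    (ht : 0 < t) :
    t ^ p * (log (1 + t ^ ν) / p - ν / (p * (p - 1)))
      ≤ ∫ s in (0 : ℝ)..t, s ^ (p - 1) * log (1 + s ^ ν) := by
  set L := log (1 + t ^ ν)
  have hi₁ : IntervalIntegrable (fun s : ℝ ↦ s ^ (p - 1)) volume 0 t :=
    intervalIntegral.intervalIntegrable_rpow' (by linarith)
  have hi₂ : IntervalIntegrable (fun s : ℝ ↦ s ^ (p - 2)) volume 0 t :=
    intervalIntegral.intervalIntegrable_rpow' (by linarith)
  have hint : IntervalIntegrable (fun s : ℝ ↦ s ^ (p - 1) * log (1 + s ^ ν)) volume 0 t := by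
    refine ContinuousOn.intervalIntegrable ?_
    refine (continuous_rpow_const (by linarith)).continuousOn.mul
      (ContinuousOn.log (by fun_prop) fun s hs ↦ ?_)
    rw [uIcc_of_le ht.le] at hs
    have := rpow_nonneg hs.1 ν
    positivity
  have hlower : ∫ s in (0 : ℝ)..t, ((L + ν) * s ^ (p - 1) - ν * t * s ^ (p - 2))
      = t ^ p * (L / p - ν / (p * (p - 1))) := by
    rw [intervalIntegral.integral_sub (hi₁.const_mul _) (hi₂.const_mul _),
      intervalIntegral.integral_const_mul, intervalIntegral.integral_const_mul,
      integral_rpow (Or.inl (by linarith)), integral_rpow (Or.inl (by linarith)),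
      zero_rpow (by linarith), zero_rpow (by linarith),
      show p - 1 + 1 = p by ring, show p - 2 + 1 = p - 1 by ring,
      show t ^ p = t * t ^ (p - 1) by rw [← rpow_one_add' ht.le (by linarith)]; ring_nf]
    have hp₁ : p - 1 ≠ 0 := by linarith
    field_simp
    ring
  rw [← hlower]
  exact intervalIntegral.integral_mono_on_of_le_Ioo ht.le
    ((hi₁.const_mul _).sub (hi₂.const_mul _)) hint
    fun s hs ↦ rpow_sub_one_mul_log_one_add_rpow_ge hν hs.1 hs.2.le

lemma tendsto_log_one_add_rpow_atTop {ν : ℝ} (hν : 0 < ν) :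
    Tendsto (fun t : ℝ ↦ log (1 + t ^ ν)) atTop atTop :=
  tendsto_log_atTop.comp (tendsto_atTop_add_const_left _ 1 (tendsto_rpow_atTop hν))

/-- The model nonlinearity `g(t) = |t|^{p−2} t · ln(1 + |t|^ν)` does not satisfy
the Ambrosetti–Rabinowitz condition: there are no `μ′ > p` and `R > 0` with
`0 < μ′ G(t) ≤ g(t) t` for all `|t| ≥ R`. -/
theorem example_fails_AR
    (p ν : ℝ) (hp : 1 < p) (hν : 1 ≤ ν)
    (g : ℝ → ℝ) (hg : ∀ t, g t = |t| ^ (p - 2) * t * Real.log (1 + |t| ^ ν))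
    (G : ℝ → ℝ) (hG : ∀ t, G t = ∫ s in (0:ℝ)..t, g s) :
    ¬ ∃ μ' : ℝ, p < μ' ∧ ∃ R : ℝ, 0 < R ∧ ∀ t : ℝ, R ≤ |t| →
        0 < μ' * G t ∧ μ' * G t ≤ g t * t := by
  rintro ⟨μ', hμ', R, -, hAR⟩
  have hg_pos {s : ℝ} (hs : 0 < s) : g s = s ^ (p - 1) * log (1 + s ^ ν) := by
    rw [hg, abs_of_pos hs, ← rpow_add_one hs.ne']
    ring_nf
  set C := ν / (p * (p - 1))
  have hk : 0 < μ' / p - 1 := sub_pos.2 ((one_lt_div (by linarith)).2 hμ')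
  have hL := (tendsto_log_one_add_rpow_atTop (ν := ν) (by linarith)).const_mul_atTop hk
  obtain ⟨t, htR, ht, hLt⟩ := ((eventually_ge_atTop R).and
    ((eventually_gt_atTop 0).and (hL.eventually_gt_atTop (μ' * C)))).exists
  set L := log (1 + t ^ ν)
  have hGt : t ^ p * (L / p - C) ≤ G t :=
    calc t ^ p * (L / p - C) ≤ ∫ s in (0 : ℝ)..t, s ^ (p - 1) * log (1 + s ^ ν) :=
        integral_rpow_sub_one_mul_log_one_add_rpow_ge hp (by linarith) ht
      _ = G t := by
        rw [hG]
        refine intervalIntegral.integral_congr_ae (.of_forall fun s hs ↦ ?_)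
        rw [uIoc_of_le ht.le] at hs
        exact (hg_pos hs.1).symm
  have hgt : g t * t = t ^ p * L := by
    rw [hg_pos ht, mul_right_comm, ← rpow_add_one ht.ne', sub_add_cancel]
  have hAR_t : μ' * (L / p - C) ≤ L := by
    refine le_of_mul_le_mul_left ?_ (rpow_pos_of_pos ht p)
    calc t ^ p * (μ' * (L / p - C)) = μ' * (t ^ p * (L / p - C)) := by ring
      _ ≤ μ' * G t := mul_le_mul_of_nonneg_left hGt (by linarith)
      _ ≤ g t * t := (hAR t (by rwa [abs_of_pos ht])).2
      _ = t ^ p * L := hgt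
  linarith [show μ' * (L / p - C) = (μ' / p - 1) * L + L - μ' * C by ring]
end
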